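/- Assume there exists k* ∈ ℕ₀ with f(k) ≤ k for all k ≥ k* (and 0 < f(k) ≤ k+1 for all k). Set C = f(0)·max(1, max_{1 ≤ k ≤ k*} ∏_{i=1}^{k} f(i)/i). Then h(k,ℓ) ≤ C/ℓ for all ℓ ≥ 1 and all k ≤ ℓ-1, where h(k,ℓ) = f(k)P(X_ℓ=k) - P(X_ℓ ≥ k+1). -/

import Mathlib

open Finset

/-- `ChainLaw f p` says that `p ℓ k = P(X_ℓ = k)` is the law of the Markov chain
`(X_ℓ)_{ℓ ≥ 1}` with `X_1 = 0` and time-inhomogeneous transitions: from state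
`i` at time `n`, move to `i+1` with probability `f i/(n+1)`, return to `0` with
probability `1/(n+1)` if `i ≥ 1` (so that it stays at `i` with probability
`(n - f i)/(n+1)`), and, from `i = 0`, move to `1` with probability `f 0/(n+1)`
and stay at `0` otherwise.  (The chain has total mass one, so the probability
of being at `0` at time `n+1` is
`p n 0 (n+1-f 0)/(n+1) + (∑_{i ≥ 1} p n i)/(n+1) = p n 0 (n+1-f 0)/(n+1) + (1 - p n 0)/(n+1)`.) -/
def ChainLaw (f : ℕ → ℝ) (p : ℕ → ℕ → ℝ) : Prop :=
  (∀ k, p 1 k = if k = 0 then 1 else 0) ∧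
  (∀ n, 1 ≤ n →
    p (n + 1) 0 = p n 0 * (((n : ℝ) + 1 - f 0) / ((n : ℝ) + 1))
      + (1 - p n 0) * (1 / ((n : ℝ) + 1))) ∧
  (∀ n, 1 ≤ n → ∀ j, 1 ≤ j →
    p (n + 1) j = p n (j - 1) * (f (j - 1) / ((n : ℝ) + 1))
      + p n j * (((n : ℝ) - f j) / ((n : ℝ) + 1)))

/-- `Hk f p k ℓ = f k P(X_ℓ = k) - P(X_ℓ ≥ k+1)`; since `X_ℓ ≤ ℓ - 1` a.s.,
`P(X_ℓ ≥ k+1) = ∑_{j=k+1}^{ℓ-1} p ℓ j`. -/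
def Hk (f : ℕ → ℝ) (p : ℕ → ℕ → ℝ) (k ℓ : ℕ) : ℝ :=
  f k * p ℓ k - ∑ j ∈ Finset.Ico (k + 1) ℓ, p ℓ j

/-!
Off the diagonal, `h(·, ℓ + 1)` is a combination of `h(k, ℓ)` and `h(k - 1, ℓ)` with nonnegative
weights `(ℓ - f k)/(ℓ + 1)` and `f k/(ℓ + 1)` (as `f k ≤ k + 1 ≤ ℓ`) summing to `ℓ/(ℓ + 1)`,
so the bound `C/ℓ` at time `ℓ` gives `C/(ℓ + 1)` at time `ℓ + 1`. On the diagonal,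
`h(ℓ, ℓ + 1) = f 0/(ℓ + 1) · ∏_{i=1}^{ℓ} f i/i` exactly, and this product is at most its
maximum over `ℓ ≤ k*`, since every factor with `i > k*` is at most `1`.
-/

lemma sub_mul_add_mul_le {n c a b C : ℝ} (hn : 0 < n) (hc₀ : 0 ≤ c) (hcn : c ≤ n)
    (ha : a ≤ C / n) (hb : b ≤ C / n) : (n - c) * a + c * b ≤ C := by
  calc (n - c) * a + c * b ≤ (n - c) * (C / n) + c * (C / n) := by gcongr
    _ = C := by field_simp; ring

lemma prod_Icc_le_sup' {g : ℕ → ℝ} {K : ℕ} (hg₀ : ∀ i, 0 ≤ g i) (hg₁ : ∀ i, K < i → g i ≤ 1)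
    (hK : (Icc 0 K).Nonempty) (m : ℕ) :
    ∏ i ∈ Icc 1 m, g i ≤ (Icc 0 K).sup' hK (fun m => ∏ i ∈ Icc 1 m, g i) := by
  induction m with
  | zero => exact le_sup' (fun m => ∏ i ∈ Icc 1 m, g i) (by simp)
  | succ m ih =>
    by_cases hm : m + 1 ≤ K
    · exact le_sup' (fun m => ∏ i ∈ Icc 1 m, g i) (by simp [hm])
    · rw [prod_Icc_succ_top (by omega)]
      exact (mul_le_of_le_one_right (prod_nonneg fun i _ => hg₀ i) (hg₁ _ (by omega))).trans ih

namespace ChainLaw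

variable {f : ℕ → ℝ} {p : ℕ → ℕ → ℝ}

lemma apply_eq_zero_of_le (hp : ChainLaw f p) {n j : ℕ} (hn : 1 ≤ n) (hj : n ≤ j) :
    p n j = 0 := by
  induction n, hn using Nat.le_induction generalizing j with
  | base => rw [hp.1 j, if_neg (by omega)]
  | succ n hn ih =>
    rw [hp.2.2 n hn j (by omega), ih (by omega), ih (by omega)]
    ring

lemma sum_Ico_succ (hp : ChainLaw f p) {n k : ℕ} (hn : 1 ≤ n) (hk : k < n) :
    ∑ j ∈ Ico (k + 1) (n + 1), p (n + 1) j
      = (f k * p n k + n * ∑ j ∈ Ico (k + 1) n, p n j) / (n + 1) := by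
  have hstep : ∀ j ∈ Ico (k + 1) (n + 1), p (n + 1) j
      = p n (j - 1) * (f (j - 1) / (n + 1)) + p n j * ((n - f j) / (n + 1)) :=
    fun j hj => hp.2.2 n hn j (by have := (mem_Ico.1 hj).1; omega)
  rw [sum_congr rfl hstep, sum_add_distrib,
    sum_Ico_add_right_sub_eq (f := fun j => p n j * (f j / (n + 1))),
    sum_Ico_succ_top (by omega : k + 1 ≤ n), hp.apply_eq_zero_of_le hn le_rfl, zero_mul,
    add_zero, sum_eq_sum_Ico_succ_bot hk, add_assoc, ← sum_add_distrib]
  have hcollect : ∀ j ∈ Ico (k + 1) n,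
      p n j * (f j / (n + 1)) + p n j * ((n - f j) / (n + 1)) = p n j * (n / (n + 1)) := by
    intro j _
    ring
  rw [sum_congr rfl hcollect, ← sum_mul]
  ring

lemma sum_Ico_one (hp : ChainLaw f p) {n : ℕ} (hn : 1 ≤ n) :
    ∑ j ∈ Ico 1 n, p n j = 1 - p n 0 := by
  induction n, hn using Nat.le_induction with
  | base => simp [hp.1]
  | succ n hn ih =>
    rw [hp.sum_Ico_succ hn hn, ih, hp.2.1 n hn]
    field_simp
    ring

lemma mul_apply_succ_self (hp : ChainLaw f p) (n : ℕ) :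
    f n * p (n + 1) n = f 0 / (n + 1) * ∏ i ∈ Icc 1 n, f i / i := by
  induction n with
  | zero => simp [hp.1]
  | succ n ih =>
    have hdiag := hp.2.2 (n + 1) (by omega) (n + 1) (by omega)
    rw [Nat.add_sub_cancel, hp.apply_eq_zero_of_le (by omega) le_rfl, zero_mul,
      add_zero] at hdiag
    rw [prod_Icc_succ_top (by omega), hdiag]
    calc f (n + 1) * (p (n + 1) n * (f n / ((n + 1 : ℕ) + 1)))
        = f (n + 1) / ((n + 1 : ℕ) + 1) * (f n * p (n + 1) n) := by ring
      _ = _ := by rw [ih]; push_cast; field_simp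

lemma Hk_self_succ (hp : ChainLaw f p) (n : ℕ) :
    Hk f p n (n + 1) = f 0 / (n + 1) * ∏ i ∈ Icc 1 n, f i / i := by
  simp [Hk, hp.mul_apply_succ_self n]

lemma Hk_zero_succ (hp : ChainLaw f p) {n : ℕ} (hn : 1 ≤ n) :
    Hk f p 0 (n + 1) = (n - f 0) * Hk f p 0 n / (n + 1) := by
  simp only [Hk, zero_add]
  rw [hp.sum_Ico_succ hn hn, hp.sum_Ico_one hn, hp.2.1 n hn]
  field_simp
  ring

lemma Hk_succ_succ (hp : ChainLaw f p) {n k : ℕ} (hn : 1 ≤ n) (hk : k + 1 < n) :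
    Hk f p (k + 1) (n + 1)
      = ((n - f (k + 1)) * Hk f p (k + 1) n + f (k + 1) * Hk f p k n) / (n + 1) := by
  simp only [Hk]
  rw [hp.2.2 n hn (k + 1) (by omega), Nat.add_sub_cancel, hp.sum_Ico_succ hn hk,
    sum_eq_sum_Ico_succ_bot hk]
  field_simp
  ring

lemma Hk_le_div (hp : ChainLaw f p) (hf₀ : ∀ k, 0 ≤ f k) (hf : ∀ k, f k ≤ k + 1) {C : ℝ}
    (hC : ∀ n, f 0 * ∏ i ∈ Icc 1 n, f i / i ≤ C) {ℓ : ℕ} (hℓ : 1 ≤ ℓ) :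
    ∀ k < ℓ, Hk f p k ℓ ≤ C / ℓ := by
  have boundary (n : ℕ) : Hk f p n (n + 1) ≤ C / (n + 1 : ℕ) := by
    rw [hp.Hk_self_succ, div_mul_eq_mul_div, Nat.cast_succ]
    gcongr
    exact hC n
  have hC₀ : 0 ≤ C := (by simpa using hf₀ 0 : 0 ≤ f 0 * ∏ i ∈ Icc 1 0, f i / i).trans (hC 0)
  induction ℓ, hℓ using Nat.le_induction with
  | base =>
    intro k hk
    obtain rfl : k = 0 := by omega
    exact boundary 0
  | succ n hn ih =>
    intro k hk
    rcases (Nat.lt_succ_iff.mp hk).eq_or_lt with rfl | hkn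
    · exact boundary k
    have hn₀ : (0 : ℝ) < n := by exact_mod_cast hn
    have hfkn : f k ≤ n := (hf k).trans (by exact_mod_cast hkn)
    rw [Nat.cast_succ]
    rcases k with _ | k
    · rw [hp.Hk_zero_succ hn]
      have hstep := sub_mul_add_mul_le (b := 0) hn₀ (hf₀ 0) hfkn (ih 0 hkn) (by positivity)
      exact div_le_div_of_nonneg_right (by simpa using hstep) (by positivity)
    · rw [hp.Hk_succ_succ hn hkn]
      exact div_le_div_of_nonneg_right
        (sub_mul_add_mul_le hn₀ (hf₀ _) hfkn (ih _ hkn) (ih k (by omega))) (by positivity)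

end ChainLaw

/-- if `f k ≤ k` for all `k ≥ k*` then, with
`C = f 0 · max(1, max_{1 ≤ m ≤ k*} ∏_{i=1}^m f i / i)` (the maximum over
`m ∈ {0, …, k*}`, the term `m = 0` giving the empty product `1`),
we have `h(k,ℓ) ≤ C/ℓ` for all `ℓ ≥ 1` and `k ≤ ℓ-1`. -/
theorem Hk_upper_bound (f : ℕ → ℝ) (hfpos : ∀ k, 0 < f k)
    (hfle : ∀ k, f k ≤ (k : ℝ) + 1) (p : ℕ → ℕ → ℝ) (hp : ChainLaw f p)
    (kst : ℕ) (hkst : ∀ k, kst ≤ k → f k ≤ (k : ℝ)) :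
    ∀ ℓ, 1 ≤ ℓ → ∀ k, k ≤ ℓ - 1 →
      Hk f p k ℓ ≤
        (f 0 * (Finset.Icc 0 kst).sup'
            (Finset.nonempty_Icc.mpr (Nat.zero_le kst))
            (fun m => ∏ i ∈ Finset.Icc 1 m, f i / (i : ℝ))) / (ℓ : ℝ) := by
  intro ℓ hℓ k hk
  have hprod (n : ℕ) := prod_Icc_le_sup' (g := fun i => f i / i)
    (fun i => div_nonneg (hfpos i).le i.cast_nonneg)
    (fun i hi => div_le_one_of_le₀ (hkst i hi.le) i.cast_nonneg)
    (nonempty_Icc.mpr (Nat.zero_le kst)) n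
  exact hp.Hk_le_div (fun k => (hfpos k).le) hfle
    (fun n => mul_le_mul_of_nonneg_left (hprod n) (hfpos 0).le) hℓ k (by omega)
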